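/- Let f : [−π,π]³ → M₃(ℝ) be continuous with values in symmetric 3×3 real matrices, and suppose there is c > 0 such that ⟨v, f(p)v⟩ ≥ c|p|²|v|² for all p and v ∈ ℝ³, and that f(p) is positive definite for every p ≠ 0. For N ≥ 1 let Λ_N = ((2π/N)ℤ)³ ∩ [−π,π)³ be the discrete Brillouin zone (a set of N³ points). Then (1/N³) ∑_{p ∈ Λ_N, p ≠ 0} log det f(p) converges, as N → ∞, to (2π)⁻³ ∫_{[−π,π]³} log det f(p) dp. -/

import Mathlib

open scoped BigOperators
open Matrix MeasureTheory

/-- The cube `[−π, π]³`. -/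
def brillouinCube : Set (Fin 3 → ℝ) :=
  Set.pi Set.univ fun _ => Set.Icc (-Real.pi) Real.pi

/-- The grid point `(2π/N)·m ∈ ℝ³` attached to `m ∈ ℤ³`. -/
noncomputable def gridPt (N : ℕ) (m : Fin 3 → ℤ) : Fin 3 → ℝ :=
  fun i => 2 * Real.pi * (m i : ℝ) / N

/-- The index set of the discrete Brillouin zone `((2π/N)ℤ)³ ∩ [−π,π)³`: those `m ∈ ℤ³`
with each coordinate satisfying `−π ≤ 2π mᵢ/N < π`, i.e. `−⌊N/2⌋ ≤ mᵢ < ⌈N/2⌉`;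
it has exactly `N³` elements. -/
noncomputable def gridIdx (N : ℕ) : Finset (Fin 3 → ℤ) :=
  Fintype.piFinset fun _ => Finset.Ico (-((N : ℤ) / 2)) (((N : ℤ) + 1) / 2)

/-!
The Riemann sum is `(2π)⁻³` times the integral of the step function equal to
`log det f (gridPt N m)` on the cell `gridPt N m + [0, 2π/N)³`, the cell of the origin left out.
Off the origin and the boundary of the cube these step functions converge pointwise by
continuity, so dominated convergence applies once the logarithmic singularity is controlled
uniformly in `N`: the lower bound gives `det f p ≥ (c‖p‖²)³`, and every point `x` of a cell other
than the origin's satisfies `|x 0| ≤ ‖x‖ ≤ 2‖p‖`, so `|log det f p| ≤ K + 6 |log (|x 0| / 2)|`,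
an integrable function of a single coordinate.
-/

open Real Set Filter Topology Metric

theorem Matrix.IsHermitian.pow_card_le_det {n : Type*} [Fintype n] [DecidableEq n]
    {A : Matrix n n ℝ} (hA : A.IsHermitian) {μ : ℝ} (hμ : 0 ≤ μ)
    (h : ∀ v, μ * (v ⬝ᵥ v) ≤ v ⬝ᵥ A *ᵥ v) : μ ^ Fintype.card n ≤ A.det := by
  have hμ_le : ∀ i, μ ≤ hA.eigenvalues i := fun i => by
    have hunit : ⇑(hA.eigenvectorBasis i) ⬝ᵥ ⇑(hA.eigenvectorBasis i) = 1 := by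
      have := real_inner_self_eq_norm_sq (hA.eigenvectorBasis i)
      rwa [hA.eigenvectorBasis.orthonormal.1 i, EuclideanSpace.inner_eq_star_dotProduct,
        star_trivial, one_pow] at this
    simpa [hA.eigenvalues_eq i, hunit] using h (hA.eigenvectorBasis i)
  calc μ ^ Fintype.card n = ∏ _i : n, μ := by simp
    _ ≤ ∏ i, hA.eigenvalues i := Finset.prod_le_prod (fun _ _ => hμ) fun i _ => hμ_le i
    _ = A.det := by simpa using hA.det_eq_prod_eigenvalues.symm

theorem sq_norm_le_sum_sq {ι : Type*} [Fintype ι] (p : ι → ℝ) : ‖p‖ ^ 2 ≤ ∑ i, p i ^ 2 := by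
  have : ‖p‖ ≤ √(∑ i, p i ^ 2) := (pi_norm_le_iff_of_nonneg (sqrt_nonneg _)).2 fun i =>
    Real.abs_le_sqrt (Finset.single_le_sum (fun j _ => sq_nonneg (p j)) (Finset.mem_univ i))
  calc ‖p‖ ^ 2 ≤ √(∑ i, p i ^ 2) ^ 2 := by gcongr
    _ = _ := sq_sqrt (Finset.sum_nonneg fun i _ => sq_nonneg (p i))

theorem integrable_indicator_closedBall_comp_eval {ι : Type*} [Fintype ι] {h : ℝ → ℝ} {R : ℝ}
    (i : ι) (hh : IntegrableOn h (closedBall 0 R)) :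
    Integrable ((closedBall (0 : ι → ℝ) R).indicator fun x => h (x i)) := by
  have : Nonempty ι := ⟨i⟩
  have : IsFiniteMeasure (volume.restrict (closedBall (0 : ℝ) R)) :=
    isFiniteMeasure_restrict.2 measure_closedBall_lt_top.ne
  rw [integrable_indicator_iff measurableSet_closedBall, IntegrableOn, closedBall_pi',
    volume_pi, Measure.restrict_pi_pi]
  exact integrable_comp_eval hh

theorem integrableOn_log_closedBall (R : ℝ) : IntegrableOn log (closedBall 0 R) := by
  rcases lt_or_ge R 0 with hR | hR
  · simp [closedBall_eq_empty.2 hR]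
  · rw [Real.closedBall_eq_Icc, zero_sub, zero_add,
      ← intervalIntegrable_iff_integrableOn_Icc_of_le (by linarith)]
    exact intervalIntegral.intervalIntegrable_log'

section Grid

noncomputable def cellIdx (N : ℕ) (x : Fin 3 → ℝ) : Fin 3 → ℤ :=
  fun i => ⌊N * x i / (2 * π)⌋

noncomputable def gridCell (N : ℕ) (m : Fin 3 → ℤ) : Set (Fin 3 → ℝ) :=
  Set.pi univ fun i => Ico (gridPt N m i) (gridPt N m i + 2 * π / N)

variable {N : ℕ} {m : Fin 3 → ℤ} {x : Fin 3 → ℝ}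

theorem mem_gridCell_iff (hN : 0 < N) : x ∈ gridCell N m ↔ cellIdx N x = m := by
  have hN' : (0 : ℝ) < N := Nat.cast_pos.2 hN
  have hcoord : ∀ i, x i ∈ Ico (gridPt N m i) (gridPt N m i + 2 * π / N) ↔
      ⌊N * x i / (2 * π)⌋ = m i := fun i => by
    rw [Int.floor_eq_iff, mem_Ico, gridPt, ← add_div, div_le_iff₀ hN', lt_div_iff₀ hN',
      le_div_iff₀ (by positivity), div_lt_iff₀ (by positivity)]
    constructor <;> rintro ⟨h₁, h₂⟩ <;> constructor <;> linarith
  simp only [gridCell, Set.mem_pi, mem_univ, true_imp_iff, hcoord, funext_iff, cellIdx]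

theorem mem_gridCell_cellIdx (hN : 0 < N) (x : Fin 3 → ℝ) : x ∈ gridCell N (cellIdx N x) :=
  (mem_gridCell_iff hN).2 rfl

theorem dist_gridPt_cellIdx_lt (hN : 0 < N) (x : Fin 3 → ℝ) :
    dist x (gridPt N (cellIdx N x)) < 2 * π / N := by
  refine (dist_pi_lt_iff (by positivity)).2 fun i => ?_
  obtain ⟨h₁, h₂⟩ := mem_gridCell_cellIdx hN x i (mem_univ i)
  rw [Real.dist_eq, abs_lt]
  constructor <;> linarith [show 0 < 2 * π / N by positivity]

theorem tendsto_gridPt_cellIdx (x : Fin 3 → ℝ) :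
    Tendsto (fun N => gridPt N (cellIdx N x)) atTop (𝓝 x) := by
  refine tendsto_iff_dist_tendsto_zero.2 <| squeeze_zero' (.of_forall fun _ => dist_nonneg) ?_
    (tendsto_const_div_atTop_nhds_zero_nat (2 * π))
  filter_upwards [eventually_gt_atTop 0] with N hN
  rw [dist_comm]
  exact (dist_gridPt_cellIdx_lt hN x).le

theorem mem_gridIdx_iff (hN : 0 < N) :
    m ∈ gridIdx N ↔ gridPt N m ∈ Set.pi univ fun _ => Ico (-π) π := by
  have hN' : (0 : ℝ) < N := Nat.cast_pos.2 hN
  have hcoord : ∀ k : ℤ, (-((N : ℤ) / 2) ≤ k ∧ k < ((N : ℤ) + 1) / 2) ↔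
      2 * π * k / N ∈ Ico (-π) π := fun k => by
    have : (-((N : ℤ) / 2) ≤ k ∧ k < ((N : ℤ) + 1) / 2) ↔ (-N ≤ 2 * k ∧ 2 * k < N) := by omega
    rw [this, mem_Ico, le_div_iff₀ hN', div_lt_iff₀ hN', ← @Int.cast_le ℝ, ← @Int.cast_lt ℝ]
    push_cast
    constructor <;> rintro ⟨h₁, h₂⟩ <;> constructor <;> nlinarith [pi_pos]
  simp only [gridIdx, Fintype.mem_piFinset, Finset.mem_Ico, hcoord, Set.mem_pi, mem_univ,
    true_imp_iff]
  rfl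

theorem gridPt_mem_brillouinCube (hN : 0 < N) (hm : m ∈ gridIdx N) :
    gridPt N m ∈ brillouinCube :=
  pi_mono (fun _ _ => Ico_subset_Icc_self) ((mem_gridIdx_iff hN).1 hm)

theorem norm_le_pi_of_mem_brillouinCube {p : Fin 3 → ℝ} (hp : p ∈ brillouinCube) : ‖p‖ ≤ π :=
  (pi_norm_le_iff_of_nonneg pi_pos.le).2 fun i => abs_le.2 (hp i (mem_univ i))

@[simp]
theorem gridPt_zero (N : ℕ) : gridPt N 0 = 0 := by
  ext i
  simp [gridPt]

theorem two_pi_div_le_norm_gridPt (hm : m ≠ 0) : 2 * π / N ≤ ‖gridPt N m‖ := by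
  obtain ⟨j, hj⟩ := Function.ne_iff.1 hm
  have h₁ : (1 : ℝ) ≤ |(m j : ℝ)| := by exact_mod_cast Int.one_le_abs hj
  calc 2 * π / N ≤ 2 * π * |(m j : ℝ)| / N :=
        div_le_div_of_nonneg_right (le_mul_of_one_le_right (by positivity) h₁) N.cast_nonneg
    _ = ‖gridPt N m j‖ := by simp [gridPt, abs_of_pos pi_pos]
    _ ≤ ‖gridPt N m‖ := norm_le_pi_norm _ j

theorem measurableSet_brillouinCube : MeasurableSet brillouinCube :=
  .univ_pi fun _ => measurableSet_Icc

theorem measurableSet_gridCell (N : ℕ) (m : Fin 3 → ℤ) : MeasurableSet (gridCell N m) :=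
  .univ_pi fun _ => measurableSet_Ico

theorem volume_gridCell (N : ℕ) (m : Fin 3 → ℤ) :
    volume (gridCell N m) = ENNReal.ofReal ((2 * π / N) ^ 3) := by
  rw [gridCell, volume_pi_pi, ENNReal.ofReal_pow (by positivity)]
  simp

noncomputable def riemannStep (g : (Fin 3 → ℝ) → ℝ) (N : ℕ) (x : Fin 3 → ℝ) : ℝ :=
  if cellIdx N x ∈ (gridIdx N).erase 0 then g (gridPt N (cellIdx N x)) else 0

theorem riemannStep_eq_sum_indicator (g : (Fin 3 → ℝ) → ℝ) (hN : 0 < N) :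
    riemannStep g N =
      fun x => ∑ m ∈ (gridIdx N).erase 0, (gridCell N m).indicator (fun _ => g (gridPt N m)) x := by
  ext x
  simp only [riemannStep, indicator, mem_gridCell_iff hN, Finset.sum_ite_eq]

theorem integral_riemannStep (g : (Fin 3 → ℝ) → ℝ) (hN : 0 < N) :
    ∫ x, riemannStep g N x = (2 * π / N) ^ 3 * ∑ m ∈ (gridIdx N).erase 0, g (gridPt N m) := by
  rw [riemannStep_eq_sum_indicator g hN, integral_finsetSum _ fun m _ =>
    (integrableOn_const (by simp [volume_gridCell])).integrable_indicator
      (measurableSet_gridCell N m), Finset.mul_sum]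
  refine Finset.sum_congr rfl fun m _ => ?_
  rw [integral_indicator_const _ (measurableSet_gridCell N m), measureReal_def, volume_gridCell,
    ENNReal.toReal_ofReal (by positivity), smul_eq_mul]

theorem aestronglyMeasurable_riemannStep (g : (Fin 3 → ℝ) → ℝ) (hN : 0 < N) :
    AEStronglyMeasurable (riemannStep g N) := by
  rw [riemannStep_eq_sum_indicator g hN]
  exact Finset.aestronglyMeasurable_fun_sum _ fun m _ =>
    (aestronglyMeasurable_const.indicator (measurableSet_gridCell N m))

theorem tendsto_riemannStep_of_mem_pi_Ioo {g : (Fin 3 → ℝ) → ℝ}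
    (hg : ContinuousWithinAt g brillouinCube x) (hx : x ∈ Set.pi univ fun _ => Ioo (-π) π)
    (hx0 : x ≠ 0) : Tendsto (fun N => riemannStep g N x) atTop (𝓝 (g x)) := by
  have hq := tendsto_gridPt_cellIdx x
  have hbox : ∀ᶠ N in atTop, gridPt N (cellIdx N x) ∈ Set.pi univ fun _ => Ioo (-π) π :=
    hq.eventually_mem ((isOpen_set_pi finite_univ fun _ _ => isOpen_Ioo).mem_nhds hx)
  have hstep : ∀ᶠ N in atTop, riemannStep g N x = g (gridPt N (cellIdx N x)) := by
    filter_upwards [hbox, hq.eventually_ne hx0, eventually_gt_atTop 0] with N hbox hne hN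
    have hmem : cellIdx N x ∈ gridIdx N :=
      (mem_gridIdx_iff hN).2 (pi_mono (fun _ _ => Ioo_subset_Ico_self) hbox)
    have hne' : cellIdx N x ≠ 0 := fun h => hne (by rw [h, gridPt_zero])
    rw [riemannStep, if_pos (Finset.mem_erase.2 ⟨hne', hmem⟩)]
  refine (hg.tendsto.comp (tendsto_nhdsWithin_iff.2 ⟨hq, ?_⟩)).congr' (hstep.mono fun _ h => h.symm)
  filter_upwards [hbox] with N hN
  exact pi_mono (fun _ _ => Ioo_subset_Icc_self) hN

theorem riemannStep_eventually_eq_zero (g : (Fin 3 → ℝ) → ℝ) (hx : x ∉ brillouinCube) :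
    ∀ᶠ N in atTop, riemannStep g N x = 0 := by
  have hout : ∀ᶠ N in atTop, gridPt N (cellIdx N x) ∉ brillouinCube :=
    (tendsto_gridPt_cellIdx x).eventually_mem
      ((isClosed_set_pi fun _ _ => isClosed_Icc).isOpen_compl.mem_nhds hx)
  filter_upwards [hout, eventually_gt_atTop 0] with N hout hN
  exact if_neg fun hmem => hout (gridPt_mem_brillouinCube hN (Finset.mem_of_mem_erase hmem))

theorem ae_tendsto_riemannStep {g : (Fin 3 → ℝ) → ℝ}
    (hg : ∀ x ∈ brillouinCube, x ≠ 0 → ContinuousWithinAt g brillouinCube x) :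
    ∀ᵐ x, Tendsto (fun N => riemannStep g N x) atTop (𝓝 (brillouinCube.indicator g x)) := by
  have hbdry : (Set.pi univ fun _ => Ioo (-π) π) =ᵐ[volume] brillouinCube := by
    rw [brillouinCube, pi_univ_Icc, volume_pi]
    exact Measure.univ_pi_Ioo_ae_eq_Icc
  filter_upwards [hbdry.mem_iff, Measure.ae_ne volume 0] with x hIoo hx0
  by_cases hx : x ∈ brillouinCube
  · rw [indicator_of_mem hx]
    exact tendsto_riemannStep_of_mem_pi_Ioo (hg x hx hx0) (hIoo.2 hx) hx0
  · rw [indicator_of_notMem hx]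
    exact tendsto_const_nhds.congr' (EventuallyEq.symm (riemannStep_eventually_eq_zero g hx))

theorem tendsto_riemannSum_of_dominated {g : (Fin 3 → ℝ) → ℝ}
    (hg : ∀ x ∈ brillouinCube, x ≠ 0 → ContinuousWithinAt g brillouinCube x)
    {bound : (Fin 3 → ℝ) → ℝ} (hbound : Integrable bound)
    (hdom : ∀ᶠ N in atTop, ∀ᵐ x, ‖riemannStep g N x‖ ≤ bound x) :
    Tendsto (fun N : ℕ => (1 / (N : ℝ) ^ 3) * ∑ m ∈ (gridIdx N).erase 0, g (gridPt N m)) atTop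
      (𝓝 ((2 * π)⁻¹ ^ 3 * ∫ p in brillouinCube, g p)) := by
  have hdct := tendsto_integral_filter_of_dominated_convergence bound
    ((eventually_gt_atTop 0).mono fun N hN => aestronglyMeasurable_riemannStep g hN) hdom hbound
    (ae_tendsto_riemannStep hg)
  rw [integral_indicator measurableSet_brillouinCube] at hdct
  refine (hdct.const_mul ((2 * π)⁻¹ ^ 3)).congr' ?_
  filter_upwards [eventually_gt_atTop 0] with N hN
  rw [integral_riemannStep g hN, ← mul_assoc]
  congr 1
  field_simp

theorem norm_riemannStep_le {g : (Fin 3 → ℝ) → ℝ} {K a : ℝ} (hK : 0 ≤ K) (ha : 0 ≤ a)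
    (hg : ∀ p ∈ brillouinCube, ∀ r, 0 < r → r ≤ ‖p‖ → |g p| ≤ K + a * |log r|)
    (hN : 0 < N) (hx0 : x 0 ≠ 0) :
    ‖riemannStep g N x‖ ≤
      (closedBall 0 (2 * π)).indicator (fun y => K + a * (log 2 + |log (y 0)|)) x := by
  unfold riemannStep
  split_ifs with hm
  · set p := gridPt N (cellIdx N x)
    have hp : p ∈ brillouinCube := gridPt_mem_brillouinCube hN (Finset.mem_of_mem_erase hm)
    have hx : ‖x‖ ≤ 2 * ‖p‖ := by
      have := norm_le_norm_add_norm_sub' x p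
      linarith [dist_eq_norm x p ▸ dist_gridPt_cellIdx_lt hN x,
        two_pi_div_le_norm_gridPt (N := N) (Finset.ne_of_mem_erase hm)]
    have hx_ball : x ∈ closedBall 0 (2 * π) :=
      mem_closedBall_zero_iff.2 (by linarith [norm_le_pi_of_mem_brillouinCube hp])
    have hr : |x 0| / 2 ≤ ‖p‖ := by linarith [norm_le_pi_norm x 0, Real.norm_eq_abs (x 0)]
    have hlog : |log (|x 0| / 2)| ≤ log 2 + |log (x 0)| := by
      rw [log_div (abs_ne_zero.2 hx0) two_ne_zero, log_abs]
      linarith [abs_sub (log (x 0)) (log 2), abs_of_pos (log_pos one_lt_two)]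
    rw [indicator_of_mem hx_ball, Real.norm_eq_abs]
    calc |g p| ≤ K + a * |log (|x 0| / 2)| := hg p hp _ (by positivity) hr
      _ ≤ K + a * (log 2 + |log (x 0)|) := by gcongr
  · rw [norm_zero]
    exact indicator_nonneg (fun y _ => by positivity [log_nonneg one_le_two]) x

end Grid

section LogDet

variable {f : (Fin 3 → ℝ) → Matrix (Fin 3) (Fin 3) ℝ} {c : ℝ}

theorem pow_le_det_of_le_norm (hsymm : ∀ p, (f p).IsSymm) (hc : 0 < c)
    (hlow : ∀ p ∈ brillouinCube, ∀ v : Fin 3 → ℝ,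
      c * (∑ i, p i ^ 2) * (∑ i, v i ^ 2) ≤ v ⬝ᵥ (f p).mulVec v)
    {p : Fin 3 → ℝ} (hp : p ∈ brillouinCube) {r : ℝ} (hr : 0 ≤ r) (hrp : r ≤ ‖p‖) :
    (c * r ^ 2) ^ 3 ≤ (f p).det := by
  simpa using (isHermitian_iff_isSymm.2 (hsymm p)).pow_card_le_det (by positivity) fun v => by
    have hvv : v ⬝ᵥ v = ∑ i, v i ^ 2 := by simp [dotProduct, sq]
    have hr2 : c * r ^ 2 ≤ c * ∑ i, p i ^ 2 := by
      gcongr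
      exact (pow_le_pow_left₀ hr hrp 2).trans (sq_norm_le_sum_sq p)
    rw [hvv]
    exact (mul_le_mul_of_nonneg_right hr2 (Finset.sum_nonneg fun i _ => sq_nonneg (v i))).trans
      (hlow p hp v)

theorem continuousWithinAt_log_det (hcont : ContinuousOn f brillouinCube)
    (hsymm : ∀ p, (f p).IsSymm) (hc : 0 < c)
    (hlow : ∀ p ∈ brillouinCube, ∀ v : Fin 3 → ℝ,
      c * (∑ i, p i ^ 2) * (∑ i, v i ^ 2) ≤ v ⬝ᵥ (f p).mulVec v)
    (p : Fin 3 → ℝ) (hp : p ∈ brillouinCube) (hp0 : p ≠ 0) :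
    ContinuousWithinAt (fun p => log (f p).det) brillouinCube p := by
  have hdet : 0 < (f p).det := lt_of_lt_of_le (by have := norm_pos_iff.2 hp0; positivity)
    (pow_le_det_of_le_norm hsymm hc hlow hp (norm_nonneg p) le_rfl)
  exact ((continuous_id.matrix_det.continuousAt).comp_continuousWithinAt (hcont p hp)).log
    hdet.ne'

theorem exists_abs_log_det_le (hcont : ContinuousOn f brillouinCube)
    (hsymm : ∀ p, (f p).IsSymm) (hc : 0 < c)
    (hlow : ∀ p ∈ brillouinCube, ∀ v : Fin 3 → ℝ,
      c * (∑ i, p i ^ 2) * (∑ i, v i ^ 2) ≤ v ⬝ᵥ (f p).mulVec v) :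
    ∃ K, 0 ≤ K ∧ ∀ p ∈ brillouinCube, ∀ r, 0 < r → r ≤ ‖p‖ →
      |log (f p).det| ≤ K + 6 * |log r| := by
  obtain ⟨C, hC⟩ := (isCompact_univ_pi fun _ => isCompact_Icc).exists_bound_of_continuousOn
    (continuous_id.matrix_det.comp_continuousOn hcont)
  refine ⟨|log C| + 3 * |log c|, by positivity, fun p hp r hr hrp => ?_⟩
  have hlower := pow_le_det_of_le_norm hsymm hc hlow hp hr.le hrp
  have hdet : 0 < (f p).det := lt_of_lt_of_le (by positivity) hlower
  have hupper : log (f p).det ≤ log C :=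
    log_le_log hdet ((le_abs_self _).trans (hC p hp))
  have hlog_lower : 3 * (log c + 2 * log r) ≤ log (f p).det := by
    have := log_le_log (by positivity) hlower
    rwa [log_pow, log_mul hc.ne' (by positivity), log_pow] at this
  rw [abs_le]
  constructor <;> linarith [le_abs_self (log C), neg_abs_le (log c), neg_abs_le (log r),
    abs_nonneg (log C), abs_nonneg (log c), abs_nonneg (log r)]

end LogDet

theorem tendsto_discrete_log_det_sum_general
    (f : (Fin 3 → ℝ) → Matrix (Fin 3) (Fin 3) ℝ)
    (hcont : ContinuousOn f brillouinCube)
    (hsymm : ∀ p, (f p).IsSymm)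
    (c : ℝ) (hc : 0 < c)
    (hlow : ∀ p ∈ brillouinCube, ∀ v : Fin 3 → ℝ,
      c * (∑ i, p i ^ 2) * (∑ i, v i ^ 2) ≤ v ⬝ᵥ (f p).mulVec v) :
    Filter.Tendsto
      (fun N : ℕ => (1 / (N : ℝ) ^ 3) *
        ∑ m ∈ (gridIdx N).erase 0, Real.log (f (gridPt N m)).det)
      Filter.atTop
      (nhds ((2 * Real.pi)⁻¹ ^ 3 * ∫ p in brillouinCube, Real.log (f p).det)) := by
  obtain ⟨K, hK, hlog⟩ := exists_abs_log_det_le hcont hsymm hc hlow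
  have hbound : IntegrableOn (fun t => K + 6 * (log 2 + |log t|)) (closedBall 0 (2 * π)) :=
    (integrableOn_const measure_closedBall_lt_top.ne).add
      (((integrableOn_const measure_closedBall_lt_top.ne).add
        (integrableOn_log_closedBall _).abs).const_mul 6)
  refine tendsto_riemannSum_of_dominated (g := fun p => log (f p).det)
    (continuousWithinAt_log_det hcont hsymm hc hlow)
    (integrable_indicator_closedBall_comp_eval 0 hbound) ?_
  filter_upwards [eventually_gt_atTop 0] with N hN
  filter_upwards [Measure.ae_eval_ne (fun _ => volume) (0 : Fin 3) (0 : ℝ)] with x hx0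
  exact norm_riemannStep_le hK (by norm_num) hlog hN hx0

/-- For `f : [−π,π]³ → M₃(ℝ)` continuous, symmetric-valued, with
`⟨v, f(p)v⟩ ≥ c|p|²|v|²` and `f(p)` positive definite for `p ≠ 0`, the Riemann sums of
`log det f` over the discrete Brillouin zones (omitting `p = 0`) converge to
`(2π)⁻³ ∫_{[−π,π]³} log det f(p) dp`. -/
theorem tendsto_discrete_log_det_sum
    (f : (Fin 3 → ℝ) → Matrix (Fin 3) (Fin 3) ℝ)
    (hcont : ContinuousOn f brillouinCube)
    (hsymm : ∀ p, (f p).IsSymm)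
    (c : ℝ) (hc : 0 < c)
    (hlow : ∀ p ∈ brillouinCube, ∀ v : Fin 3 → ℝ,
      c * (∑ i, p i ^ 2) * (∑ i, v i ^ 2) ≤ v ⬝ᵥ (f p).mulVec v)
    (hpd : ∀ p ∈ brillouinCube, p ≠ 0 → (f p).PosDef) :
    Filter.Tendsto
      (fun N : ℕ => (1 / (N : ℝ) ^ 3) *
        ∑ m ∈ (gridIdx N).erase 0, Real.log (f (gridPt N m)).det)
      Filter.atTop
      (nhds ((2 * Real.pi)⁻¹ ^ 3 * ∫ p in brillouinCube, Real.log (f p).det)) :=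
  tendsto_discrete_log_det_sum_general f hcont hsymm c hc hlow
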